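/- Failure of closure under uniform substitution for the complete system: There exist a propositional formula φ and a uniform substitution σ of formulas for propositional variables such that the complete system validates φ but does not validate σ(φ). In particular, for distinct atoms p, q, r the formula (p→(q∨r))→((p→q)∨(p→r)) is valid in the complete system, but some substitution instance obtained by replacing p with a formula containing disjunction is not valid in the complete system. -/

import Mathlib

/-!
Common framework for proof-theoretic validity (Prawitz / Piecha–Schroeder-Heister style).

* Propositional formulas over countably many atoms (`ℕ`), with `⊥`, `∧`, `∨`, `→`;
  `¬A` abbreviates `A → ⊥`.
* Higher-level atomic rules: a rule has a finite list of premises, each premise being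
  a pair of (a finite list of lower-level rules that may be discharged, an atomic
  conclusion), together with an atomic conclusion.  An atomic axiom `p̄` is
  `HLRule.mk [] p`; an assumption of an atom is identified with its axiom rule.
* `AtDeriv S p`: the atom `p` is derivable using only rules of `S`
  (discharged rules become available).
* `Deriv S Γ φ`: natural deduction NJ augmented with the atomic rules in `S`,
  from hypotheses `Γ`.  `⊢_IPC` is `Deriv ∅ ∅`.
* `Valid 𝔖 S φ` formalizes "there is a closed `S`-valid argument for `φ`" relative to
  the proof-theoretic system `𝔖` (acceptable extensions of `S` are the supersets of `S`
  belonging to `𝔖`).  Unfolding the inductive definition of `S`-validity of arguments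
  (atomic case, closed introduction case, closed non-introduction case, open case)
  clause-by-clause on the conclusion yields exactly the following recursion on formulas:
  a closed valid argument for `A ∧ B` reduces (via the non-introduction case) to one
  ending in `∧`-introduction, i.e. closed valid arguments for `A` and `B`; similarly for
  `∨`; a closed valid argument for `A → B` reduces to one ending in `→`-introduction,
  whose immediate subargument is an open argument of `B` from the assumption `A`, which
  by the open case is valid iff every acceptable extension `S' ∈ 𝔖` of `S` having a
  closed `S'`-valid argument for `A` has one for `B`; a closed valid argument for an
  atom `p` exists iff `p` is `S`-derivable; and for `⊥` (which has no introduction rule,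
  and is governed by the rules `⊥/p` for every atom `p`) iff every atom is `S`-derivable.
-/

/-- Propositional formulas over atoms `ℕ`. -/
inductive PropForm : Type
  | atom : ℕ → PropForm
  | falsum : PropForm
  | conj : PropForm → PropForm → PropForm
  | disj : PropForm → PropForm → PropForm
  | impl : PropForm → PropForm → PropForm
  deriving DecidableEq

/-- `¬A` abbreviates `A → ⊥`. -/
def PropForm.neg (A : PropForm) : PropForm := .impl A .falsum

/-- Higher-level atomic rules. -/
inductive HLRule : Type
  | mk : List (List HLRule × ℕ) → ℕ → HLRule

/-- `AtDeriv S p`: the atom `p` is derivable using only the atomic rules in `S`;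
applying a rule requires deriving each premise with its discharged rules made available. -/
inductive AtDeriv : Set HLRule → ℕ → Prop
  | app (S : Set HLRule) (prems : List (List HLRule × ℕ)) (concl : ℕ)
      (hmem : HLRule.mk prems concl ∈ S)
      (hprem : ∀ pr ∈ prems, AtDeriv (S ∪ {R | R ∈ pr.1}) pr.2) :
      AtDeriv S concl

/-- Natural deduction NJ for intuitionistic propositional logic, augmented with the
atomic rules in `S`, with hypotheses `Γ`.  `Deriv ∅ Γ φ` is `Γ ⊢_IPC φ`. -/
inductive Deriv : Set HLRule → Set PropForm → PropForm → Prop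
  | hyp {S : Set HLRule} {Γ : Set PropForm} {A : PropForm} :
      A ∈ Γ → Deriv S Γ A
  | falsumE {S : Set HLRule} {Γ : Set PropForm} {A : PropForm} :
      Deriv S Γ .falsum → Deriv S Γ A
  | andI {S : Set HLRule} {Γ : Set PropForm} {A B : PropForm} :
      Deriv S Γ A → Deriv S Γ B → Deriv S Γ (.conj A B)
  | andE1 {S : Set HLRule} {Γ : Set PropForm} {A B : PropForm} :
      Deriv S Γ (.conj A B) → Deriv S Γ A
  | andE2 {S : Set HLRule} {Γ : Set PropForm} {A B : PropForm} :
      Deriv S Γ (.conj A B) → Deriv S Γ B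
  | orI1 {S : Set HLRule} {Γ : Set PropForm} {A B : PropForm} :
      Deriv S Γ A → Deriv S Γ (.disj A B)
  | orI2 {S : Set HLRule} {Γ : Set PropForm} {A B : PropForm} :
      Deriv S Γ B → Deriv S Γ (.disj A B)
  | orE {S : Set HLRule} {Γ : Set PropForm} {A B C : PropForm} :
      Deriv S Γ (.disj A B) → Deriv S (insert A Γ) C → Deriv S (insert B Γ) C →
      Deriv S Γ C
  | implI {S : Set HLRule} {Γ : Set PropForm} {A B : PropForm} :
      Deriv S (insert A Γ) B → Deriv S Γ (.impl A B)
  | implE {S : Set HLRule} {Γ : Set PropForm} {A B : PropForm} :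
      Deriv S Γ (.impl A B) → Deriv S Γ A → Deriv S Γ B
  | rule {S : Set HLRule} {Γ : Set PropForm}
      (prems : List (List HLRule × ℕ)) (concl : ℕ) :
      HLRule.mk prems concl ∈ S →
      (∀ pr ∈ prems, Deriv (S ∪ {R | R ∈ pr.1}) Γ (.atom pr.2)) →
      Deriv S Γ (.atom concl)

/-- `⊢_IPC φ` : derivability of `φ` in intuitionistic propositional natural deduction. -/
def IPC (φ : PropForm) : Prop := Deriv ∅ ∅ φ

/-- Auxiliary form of validity, by recursion on the formula. -/
def ValidAux (𝔖 : Set (Set HLRule)) : PropForm → Set HLRule → Prop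
  | .atom p, S => AtDeriv S p
  | .falsum, S => ∀ a : ℕ, AtDeriv S a
  | .conj A B, S => ValidAux 𝔖 A S ∧ ValidAux 𝔖 B S
  | .disj A B, S => ValidAux 𝔖 A S ∨ ValidAux 𝔖 B S
  | .impl A B, S => ∀ S' ∈ 𝔖, S ⊆ S' → ValidAux 𝔖 A S' → ValidAux 𝔖 B S'

/-- `Valid 𝔖 S φ`: relative to the proof-theoretic system `𝔖` (in which the acceptable
extensions of `S` are exactly the supersets of `S` belonging to `𝔖`), there is a closed
`S`-valid argument for `φ`. -/
def Valid (𝔖 : Set (Set HLRule)) (S : Set HLRule) (φ : PropForm) : Prop :=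
  ValidAux 𝔖 φ S

/-- `𝔖 ⊨ φ`: for every `S ∈ 𝔖` there is a closed `S`-valid argument for `φ`
(acceptable extensions taken in `𝔖`). -/
def Models (𝔖 : Set (Set HLRule)) (φ : PropForm) : Prop :=
  ∀ S ∈ 𝔖, Valid 𝔖 S φ

/-- The complete proof-theoretic system: all sets of atomic rules of all levels. -/
def completeSystem : Set (Set HLRule) := Set.univ

/-- `S`-validity of the open one-premise/one-assumption argument from `A` to `B`
(relative to `𝔖`): by the open case, for every acceptable extension `S' ∈ 𝔖` of `S`,
substituting any closed `S'`-valid argument for the assumption `A` yields an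
`S'`-valid closed argument, which (the final step not being an introduction rule)
amounts to the existence of a closed `S'`-valid argument for `B`. -/
def OpenArgValid1 (𝔖 : Set (Set HLRule)) (S : Set HLRule) (A B : PropForm) : Prop :=
  ∀ S' ∈ 𝔖, S ⊆ S' → Valid 𝔖 S' A → Valid 𝔖 S' B

/-- Uniform substitution of formulas for propositional variables, extended
homomorphically. -/
def PropForm.subst (σ : ℕ → PropForm) : PropForm → PropForm
  | .atom a => σ a
  | .falsum => .falsum
  | .conj A B => .conj (A.subst σ) (B.subst σ)
  | .disj A B => .disj (A.subst σ) (B.subst σ)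
  | .impl A B => .impl (A.subst σ) (B.subst σ)

/-- A formula contains a disjunction. -/
def ContainsDisj : PropForm → Prop
  | .atom _ => False
  | .falsum => False
  | .conj A B => ContainsDisj A ∨ ContainsDisj B
  | .disj _ _ => True
  | .impl A B => ContainsDisj A ∨ ContainsDisj B

/-- Validity in the complete system. -/
def CompleteValid (φ : PropForm) : Prop := ∀ S : Set HLRule, Valid completeSystem S φ

/-- The atomic instance of generalised Harrop's rule as a formula. -/
def harropFormula (p q r : ℕ) : PropForm :=
  .impl (.impl (.atom p) (.disj (.atom q) (.atom r)))
    (.disj (.impl (.atom p) (.atom q)) (.impl (.atom p) (.atom r)))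

/-!
Harrop's formula `(p → q ∨ r) → (p → q) ∨ (p → r)` is valid in the complete system because
atoms are interpreted by the atomic base itself: if `p → q ∨ r` is valid over `S'`, then in
the extension of `S'` by the axiom `p̄` one of `q`, `r` is derivable, and a derivation that
uses `p̄` can be turned into a proof of `p → q` (resp. `p → r`) over `S'` by replacing each
use of `p̄` with a derivation of `p`; this step needs `p` to be an atom. After substituting
`q ∨ r` for `p` the premise becomes trivially valid, but over the empty base neither
`q ∨ r → q` nor `q ∨ r → r` is valid: the extensions `{r̄}` and `{q̄}` refute them.
-/

namespace HLRule

abbrev atomAxiom (p : ℕ) : HLRule := mk [] p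

end HLRule

open HLRule

namespace AtDeriv

theorem of_atomAxiom_mem {S : Set HLRule} {p : ℕ} (h : atomAxiom p ∈ S) : AtDeriv S p :=
  app S [] p h (by simp)

theorem mono {S : Set HLRule} {p : ℕ} (h : AtDeriv S p) {T : Set HLRule} (hST : S ⊆ T) :
    AtDeriv T p := by
  induction h generalizing T with
  | app S prems concl hmem _ ih =>
    exact app T prems concl (hST hmem) fun pr hpr => ih pr hpr (Set.union_subset_union_left _ hST)

theorem elim_atomAxiom {U : Set HLRule} {q : ℕ} (h : AtDeriv U q) {T : Set HLRule} {p : ℕ}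
    (hUT : U ⊆ insert (atomAxiom p) T) (hp : AtDeriv T p) : AtDeriv T q := by
  induction h generalizing T with
  | app U prems concl hmem _ ih =>
    rcases hUT hmem with h_ax | hT
    · cases h_ax
      exact hp
    · refine app T prems concl hT fun pr hpr => ih pr hpr ?_ (hp.mono Set.subset_union_left)
      rw [← Set.insert_union]
      exact Set.union_subset_union_left _ hUT

theorem eq_of_singleton_atomAxiom {a x : ℕ} (h : AtDeriv {atomAxiom a} x) : x = a := by
  obtain ⟨_, prems, _, hmem, _⟩ := h
  cases hmem
  rfl

end AtDeriv

section Validity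

variable {𝔖 : Set (Set HLRule)}

theorem valid_impl_self (S : Set HLRule) (A : PropForm) : Valid 𝔖 S (.impl A A) :=
  fun _ _ _ hA => hA

theorem valid_impl_atom_iff {S : Set HLRule} {p q : ℕ} (hS : insert (atomAxiom p) S ∈ 𝔖) :
    Valid 𝔖 S (.impl (.atom p) (.atom q)) ↔ AtDeriv (insert (atomAxiom p) S) q :=
  ⟨fun h => h _ hS (Set.subset_insert _ _) (AtDeriv.of_atomAxiom_mem (Set.mem_insert _ _)),
    fun h _ _ hSS' hp => h.elim_atomAxiom (Set.insert_subset_insert hSS') hp⟩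

theorem valid_harropFormula (h𝔖 : ∀ S ∈ 𝔖, ∀ a, insert (atomAxiom a) S ∈ 𝔖)
    (S : Set HLRule) (p q r : ℕ) : Valid 𝔖 S (harropFormula p q r) := by
  intro S' hS' _ h
  have hS'p := h𝔖 S' hS' p
  have hqr : AtDeriv (insert (atomAxiom p) S') q ∨ AtDeriv (insert (atomAxiom p) S') r :=
    h _ hS'p (Set.subset_insert _ _) (AtDeriv.of_atomAxiom_mem (Set.mem_insert _ _))
  exact hqr.imp (valid_impl_atom_iff hS'p).2 (valid_impl_atom_iff hS'p).2

theorem not_valid_impl_atom {A : PropForm} {a b : ℕ} (hab : a ≠ b) (ha : {atomAxiom a} ∈ 𝔖)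
    (hA : Valid 𝔖 {atomAxiom a} A) : ¬ Valid 𝔖 ∅ (.impl A (.atom b)) :=
  fun h => hab (h _ ha (Set.empty_subset _) hA).eq_of_singleton_atomAxiom.symm

end Validity

theorem completeValid_harropFormula (p q r : ℕ) : CompleteValid (harropFormula p q r) :=
  fun S => valid_harropFormula (𝔖 := completeSystem) (fun _ _ _ => Set.mem_univ _) S p q r

theorem harropFormula_subst_update {p q r : ℕ} (hqp : q ≠ p) (hrp : r ≠ p) (A : PropForm) :
    (harropFormula p q r).subst (Function.update .atom p A) =
      .impl (.impl A (.disj (.atom q) (.atom r)))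
        (.disj (.impl A (.atom q)) (.impl A (.atom r))) := by
  simp only [harropFormula, PropForm.subst, Function.update_self, Function.update_of_ne hqp,
    Function.update_of_ne hrp]

theorem not_completeValid_harropFormula_subst {p q r : ℕ} (hpq : p ≠ q) (hpr : p ≠ r)
    (hqr : q ≠ r) :
    ¬ CompleteValid ((harropFormula p q r).subst
      (Function.update .atom p (.disj (.atom q) (.atom r)))) := by
  intro h
  have h_empty := h ∅
  rw [harropFormula_subst_update hpq.symm hpr.symm] at h_empty
  have hq : Valid completeSystem {atomAxiom q} (.disj (.atom q) (.atom r)) :=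
    Or.inl (AtDeriv.of_atomAxiom_mem rfl)
  have hr : Valid completeSystem {atomAxiom r} (.disj (.atom q) (.atom r)) :=
    Or.inr (AtDeriv.of_atomAxiom_mem rfl)
  rcases h_empty ∅ (Set.mem_univ _) subset_rfl (valid_impl_self _ _) with h_left | h_right
  · exact not_valid_impl_atom hqr.symm (Set.mem_univ _) hr h_left
  · exact not_valid_impl_atom hqr (Set.mem_univ _) hq h_right

/-- **Failure of closure under uniform substitution for the complete system.**
There are a formula `φ` and a uniform substitution `σ` such that the complete system
validates `φ` but not `σ(φ)`.  In particular, for distinct atoms `p, q, r` the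
formula `(p → (q ∨ r)) → ((p → q) ∨ (p → r))` is valid in the complete system, but
some substitution instance obtained by replacing `p` with a formula containing
disjunction (leaving the other variables unchanged) is not. -/
theorem complete_system_not_closed_under_substitution :
    (∃ (φ : PropForm) (σ : ℕ → PropForm),
        CompleteValid φ ∧ ¬ CompleteValid (φ.subst σ)) ∧
      ∀ p q r : ℕ, p ≠ q → p ≠ r → q ≠ r →
        CompleteValid (harropFormula p q r) ∧
          ∃ σ : ℕ → PropForm,
            ContainsDisj (σ p) ∧ (∀ x : ℕ, x ≠ p → σ x = .atom x) ∧
              ¬ CompleteValid ((harropFormula p q r).subst σ) := by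
  refine ⟨⟨harropFormula 0 1 2, Function.update .atom 0 (.disj (.atom 1) (.atom 2)),
      completeValid_harropFormula 0 1 2,
      not_completeValid_harropFormula_subst (by decide) (by decide) (by decide)⟩, ?_⟩
  intro p q r hpq hpr hqr
  exact ⟨completeValid_harropFormula p q r, Function.update .atom p (.disj (.atom q) (.atom r)),
    by simp [ContainsDisj], fun _ hx => Function.update_of_ne hx _ _,
    not_completeValid_harropFormula_subst hpq hpr hqr⟩
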